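/- Let A be an invertible n×n real matrix, 1 < p < ∞, and let w be a weight on ℝ^n. Then w ∈ 𝒜_{A,p} ∩ 𝒜_{A^{−1},p} if and only if w belongs to the Muckenhoupt class A_p and w_A ∼ w, i.e., there exist constants 0 < c_1 ≤ c_2 such that c_1 w(x) ≤ w(Ax) ≤ c_2 w(x) for almost every x ∈ ℝ^n. -/

import Mathlib

open MeasureTheory Set ENNReal

namespace Paper

/-- An axis-parallel (half-open) cube in `ℝⁿ`. -/
structure Cube (n : ℕ) where
  corner : Fin n → ℝ
  side : ℝ
  side_pos : 0 < side

namespace Cube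

variable {n : ℕ}

/-- The underlying set of a cube. -/
def set (Q : Cube n) : Set (Fin n → ℝ) :=
  {x | ∀ i, Q.corner i ≤ x i ∧ x i < Q.corner i + Q.side}

/-- The volume `|Q| = side ^ n` of a cube. -/
noncomputable def vol (Q : Cube n) : ℝ := Q.side ^ n

/-- The concentric dilate `λQ` of a cube (same center, side multiplied by `l > 0`). -/
noncomputable def dilate (Q : Cube n) (l : ℝ) (hl : 0 < l) : Cube n :=
  ⟨fun i => Q.corner i + Q.side / 2 - l * Q.side / 2, l * Q.side, mul_pos hl Q.side_pos⟩

/-- The concentric triple `3Q` of a cube. -/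
noncomputable def tri (Q : Cube n) : Cube n :=
  ⟨fun i => Q.corner i - Q.side, 3 * Q.side, by have := Q.side_pos; linarith⟩

end Cube

variable {n : ℕ}

/-- The conjugate exponent `p' = p/(p-1)`. -/
noncomputable def conj (p : ℝ) : ℝ := p / (p - 1)

/-- The Euclidean length of a vector of `Fin n → ℝ`. -/
noncomputable def elen (x : Fin n → ℝ) : ℝ := Real.sqrt (∑ i, x i ^ 2)

/-- The (extended-real valued) weighted norm `‖f‖_{L^p(u)} = (∫ |f|^p u)^{1/p}`. -/
noncomputable def lpNorm (p : ℝ) (u f : (Fin n → ℝ) → ℝ) : ℝ≥0∞ :=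
  (∫⁻ x, ENNReal.ofReal (|f x| ^ p * u x)) ^ (1 / p)

/-- Membership `f ∈ L^p(u)` for a weight `u`. -/
def MemLpW (p : ℝ) (u f : (Fin n → ℝ) → ℝ) : Prop :=
  Measurable f ∧ lpNorm p u f < ⊤

/-- The fractional maximal operator
`M_α f(x) = sup_{Q ∋ x} |Q|^{α/n-1} ∫_Q |f|`. -/
noncomputable def frMax (α : ℝ) (f : (Fin n → ℝ) → ℝ) (x : Fin n → ℝ) : ℝ≥0∞ :=
  ⨆ Q : {Q : Cube n // x ∈ Q.set},
    ENNReal.ofReal (Q.1.vol ^ (α / n - 1)) * ∫⁻ y in Q.1.set, ENNReal.ofReal |f y|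

/-- The maximal operator `M_{α,s} f(x) = sup_{Q ∋ x} |Q|^{α/n} ((1/|Q|)∫_Q |f|^s)^{1/s}`. -/
noncomputable def frMaxS (α s : ℝ) (f : (Fin n → ℝ) → ℝ) (x : Fin n → ℝ) : ℝ≥0∞ :=
  ⨆ Q : {Q : Cube n // x ∈ Q.set},
    ENNReal.ofReal (Q.1.vol ^ (α / n)) *
      ((ENNReal.ofReal Q.1.vol)⁻¹ * ∫⁻ y in Q.1.set, ENNReal.ofReal (|f y| ^ s)) ^ (1 / s)

/-- The quantity whose supremum over all cubes is `[w]_{𝒜_{A,p,q}}`; for `p = 1`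
the second factor is `‖w⁻¹‖_{L^∞(Q)}`. -/
noncomputable def apqE (A : Matrix (Fin n) (Fin n) ℝ) (p q : ℝ)
    (w : (Fin n → ℝ) → ℝ) (Q : Cube n) : ℝ≥0∞ :=
  ((ENNReal.ofReal Q.vol)⁻¹ * ∫⁻ x in Q.set, ENNReal.ofReal (w (A.mulVec x)) ^ q) ^ (1 / q) *
    (if p = 1 then essSup (fun x => (ENNReal.ofReal (w x))⁻¹) (volume.restrict Q.set)
     else ((ENNReal.ofReal Q.vol)⁻¹ *
        ∫⁻ x in Q.set, ENNReal.ofReal (w x) ^ (-conj p)) ^ (1 / conj p))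

/-- The constant `[w]_{𝒜_{A,p,q}}`. -/
noncomputable def apqConst (A : Matrix (Fin n) (Fin n) ℝ) (p q : ℝ)
    (w : (Fin n → ℝ) → ℝ) : ℝ≥0∞ :=
  ⨆ Q : Cube n, apqE A p q w Q

/-- Membership in the class `𝒜_{A,p,q}`. -/
def MemApq (A : Matrix (Fin n) (Fin n) ℝ) (p q : ℝ) (w : (Fin n → ℝ) → ℝ) : Prop :=
  apqConst A p q w < ⊤

/-- The quantity whose supremum over all cubes is `[w]_{𝒜_{A,p}}`; for `p = 1` the
second factor is `‖w⁻¹‖_{L^∞(Q)}`. -/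
noncomputable def apE (A : Matrix (Fin n) (Fin n) ℝ) (p : ℝ)
    (w : (Fin n → ℝ) → ℝ) (Q : Cube n) : ℝ≥0∞ :=
  ((ENNReal.ofReal Q.vol)⁻¹ * ∫⁻ x in Q.set, ENNReal.ofReal (w (A.mulVec x))) *
    (if p = 1 then essSup (fun x => (ENNReal.ofReal (w x))⁻¹) (volume.restrict Q.set)
     else ((ENNReal.ofReal Q.vol)⁻¹ *
        ∫⁻ x in Q.set, ENNReal.ofReal (w x) ^ (1 - conj p)) ^ (p - 1))

/-- The constant `[w]_{𝒜_{A,p}}`. -/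
noncomputable def apConst (A : Matrix (Fin n) (Fin n) ℝ) (p : ℝ)
    (w : (Fin n → ℝ) → ℝ) : ℝ≥0∞ :=
  ⨆ Q : Cube n, apE A p w Q

/-- Membership in the class `𝒜_{A,p}`. -/
def MemAp (A : Matrix (Fin n) (Fin n) ℝ) (p : ℝ) (w : (Fin n → ℝ) → ℝ) : Prop :=
  apConst A p w < ⊤

/-- The quantity `v(Q)^{-1/p} (∫_Q M_α(χ_Q v)^q u)^{1/q}` whose supremum over all
cubes is the Sawyer testing constant `[u,v]_{ℳ_{α,p,q}}`. -/
noncomputable def sawyerE (α p q : ℝ) (u v : (Fin n → ℝ) → ℝ) (Q : Cube n) : ℝ≥0∞ :=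
  ((∫⁻ x in Q.set, ENNReal.ofReal (v x)) ^ (1 / p))⁻¹ *
    (∫⁻ x in Q.set, (frMax α (Q.set.indicator v) x) ^ q * ENNReal.ofReal (u x)) ^ (1 / q)

/-- The Sawyer testing constant `[u,v]_{ℳ_{α,p,q}}`. -/
noncomputable def sawyerConst (α p q : ℝ) (u v : (Fin n → ℝ) → ℝ) : ℝ≥0∞ :=
  ⨆ Q : Cube n, sawyerE α p q u v Q

/-- Membership of a pair of weights in the Sawyer class `ℳ_{α,p,q}`. -/
def MemSawyer (α p q : ℝ) (u v : (Fin n → ℝ) → ℝ) : Prop :=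
  sawyerConst α p q u v < ⊤

/-- The averaged norm `‖g‖_{r,|x|∼t}` over the annulus `t < |x| ≤ 2t`
(essential supremum when `r = ∞`). -/
noncomputable def annNorm (r : ℝ≥0∞) (g : (Fin n → ℝ) → ℝ) (t : ℝ) : ℝ≥0∞ :=
  if r = ⊤ then
    essSup (fun x => ENNReal.ofReal |g x|)
      (volume.restrict {x | t < elen x ∧ elen x ≤ 2 * t})
  else
    ((volume {x : Fin n → ℝ | elen x < 2 * t})⁻¹ *
      ∫⁻ x in {x | t < elen x ∧ elen x ≤ 2 * t}, ENNReal.ofReal (|g x| ^ r.toReal)) ^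
        (1 / r.toReal)

/-- The fractional size condition `K ∈ S_{β,r}`. -/
def SizeCond (β : ℝ) (r : ℝ≥0∞) (K : (Fin n → ℝ) → ℝ) : Prop :=
  ∃ C : ℝ, 0 < C ∧ ∀ t : ℝ, 0 < t →
    annNorm r K t ≤ ENNReal.ofReal (C * t ^ (β - n))

/-- The generalized fractional Hörmander condition `K ∈ H_{β,r}`. -/
def HormCond (β : ℝ) (r : ℝ≥0∞) (K : (Fin n → ℝ) → ℝ) : Prop :=
  ∃ c : ℝ, 1 < c ∧ ∃ C : ℝ, 0 < C ∧ ∀ x : Fin n → ℝ, ∀ R : ℝ, c * elen x < R →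
    (∑' m : ℕ, ENNReal.ofReal (((2 : ℝ) ^ (m + 1) * R) ^ ((n : ℝ) - β)) *
      annNorm r (fun y => K (y - x) - K y) (2 ^ (m + 1) * R)) ≤ ENNReal.ofReal C

/-- The integral operator `T_{α,m} f(x) = ∫ k_1(x-A_1y) ⋯ k_m(x-A_my) f(y) dy`. -/
noncomputable def intOp (m : ℕ) (k : Fin m → (Fin n → ℝ) → ℝ)
    (A : Fin m → Matrix (Fin n) (Fin n) ℝ) (f : (Fin n → ℝ) → ℝ) (x : Fin n → ℝ) : ℝ :=
  ∫ y, (∏ i, k i (x - (A i).mulVec y)) * f y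

/-- Hypothesis (H): the matrices `A i` and `A i - A j` (`i ≠ j`) are invertible. -/
def HypH (m : ℕ) (A : Fin m → Matrix (Fin n) (Fin n) ℝ) : Prop :=
  (∀ i, (A i).det ≠ 0) ∧ ∀ i j, i ≠ j → (A i - A j).det ≠ 0

/-- `T` is of strong type `(p,p)` (with respect to Lebesgue measure). -/
def StrongType (p : ℝ) (T : ((Fin n → ℝ) → ℝ) → (Fin n → ℝ) → ℝ) : Prop :=
  ∃ C : ℝ, 0 < C ∧ ∀ f : (Fin n → ℝ) → ℝ, Measurable f →
    lpNorm p (fun _ => 1) (T f) ≤ ENNReal.ofReal C * lpNorm p (fun _ => 1) f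

/-- Bounded, measurable and compactly supported functions. -/
def BddCompactSupp (f : (Fin n → ℝ) → ℝ) : Prop :=
  Measurable f ∧ (∃ M : ℝ, ∀ x, |f x| ≤ M) ∧ HasCompactSupport f

/-- A dyadic lattice: any two cubes are nested or disjoint, every cube is the union of
its children (the cubes of the family of half its side length contained in it), and
every cube has a parent of twice its side length. -/
def IsDyadicLattice (𝒟 : Set (Cube n)) : Prop :=
  (∀ Q ∈ 𝒟, ∀ Q' ∈ 𝒟, Q.set ⊆ Q'.set ∨ Q'.set ⊆ Q.set ∨ Disjoint Q.set Q'.set) ∧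
  (∀ Q ∈ 𝒟, (⋃ P ∈ {P | P ∈ 𝒟 ∧ P.side = Q.side / 2 ∧ P.set ⊆ Q.set}, P.set) = Q.set) ∧
  (∀ Q ∈ 𝒟, ∃ Q' ∈ 𝒟, Q'.side = 2 * Q.side ∧ Q.set ⊆ Q'.set)

/-- An `η`-sparse family of cubes. -/
def IsSparse (η : ℝ) (𝒮 : Set (Cube n)) : Prop :=
  ∃ E : Cube n → Set (Fin n → ℝ),
    (∀ Q ∈ 𝒮, E Q ⊆ Q.set ∧ MeasurableSet (E Q) ∧ ENNReal.ofReal (η * Q.vol) ≤ volume (E Q)) ∧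
    𝒮.PairwiseDisjoint E

/-- The sparse operator `𝒜_{α,s,𝒮} f(x) = Σ_{Q ∈ 𝒮} |Q|^{α/n} (avg_Q |f|^s)^{1/s} χ_Q(x)`. -/
noncomputable def sparseOp (α s : ℝ) (𝒮 : Set (Cube n)) (f : (Fin n → ℝ) → ℝ)
    (x : Fin n → ℝ) : ℝ≥0∞ :=
  ∑' Q : 𝒮, Set.indicator (Q : Cube n).set
    (fun _ => ENNReal.ofReal ((Q : Cube n).vol ^ (α / n)) *
      ((ENNReal.ofReal (Q : Cube n).vol)⁻¹ *
        ∫⁻ y in (Q : Cube n).set, ENNReal.ofReal (|f y| ^ s)) ^ (1 / s)) x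

/-- The quantity whose sup over `R ∈ 𝒟` is the outer testing constant `𝒯_{A,r,out,𝒟}`. -/
noncomputable def testOutE (α p q r : ℝ) (𝒟 : Set (Cube n))
    (A : Matrix (Fin n) (Fin n) ℝ) (u v : (Fin n → ℝ) → ℝ) (R : Cube n) : ℝ≥0∞ :=
  ((∫⁻ x in R.set, ENNReal.ofReal (v x)) ^ (1 / p))⁻¹ *
    (∫⁻ x, (∑' Q : {Q : Cube n // Q ∈ 𝒟 ∧ R.set ⊆ Q.set},
        Set.indicator Q.1.set (fun _ =>
          ENNReal.ofReal (Q.1.vol ^ (α / n - 1 / r)) *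
            (∫⁻ y in Q.1.set, ENNReal.ofReal (R.set.indicator v y)) ^ (1 / r)) x) ^ q *
      ENNReal.ofReal (u (A.mulVec x))) ^ (1 / q)

/-- The quantity whose sup over `R ∈ 𝒟` is the dual outer testing constant `𝒯*_{A,r,out,𝒟}`. -/
noncomputable def testOutStarE (α p q r : ℝ) (𝒟 : Set (Cube n))
    (A : Matrix (Fin n) (Fin n) ℝ) (u v : (Fin n → ℝ) → ℝ) (R : Cube n) : ℝ≥0∞ :=
  ((∫⁻ x in R.set, ENNReal.ofReal (u (A.mulVec x))) ^ (1 / conj q))⁻¹ *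
    (∫⁻ x, (∑' Q : {Q : Cube n // Q ∈ 𝒟 ∧ R.set ⊆ Q.set},
        Set.indicator Q.1.set (fun _ =>
          ENNReal.ofReal (Q.1.vol ^ (α / n - 1 / r)) *
            (∫⁻ y in Q.1.set, ENNReal.ofReal (v y)) ^ (1 / r - 1) *
            (∫⁻ y in Q.1.set, ENNReal.ofReal (R.set.indicator
              (fun z => u (A.mulVec z)) y))) x) ^ conj p *
      ENNReal.ofReal (v x)) ^ (1 / conj p)

/-- The outer testing constant `𝒯_{A,r,out,𝒟}`. -/
noncomputable def testOutConst (α p q r : ℝ) (𝒟 : Set (Cube n))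
    (A : Matrix (Fin n) (Fin n) ℝ) (u v : (Fin n → ℝ) → ℝ) : ℝ≥0∞ :=
  ⨆ R : 𝒟, testOutE α p q r 𝒟 A u v R

/-- The dual outer testing constant `𝒯*_{A,r,out,𝒟}`. -/
noncomputable def testOutStarConst (α p q r : ℝ) (𝒟 : Set (Cube n))
    (A : Matrix (Fin n) (Fin n) ℝ) (u v : (Fin n → ℝ) → ℝ) : ℝ≥0∞ :=
  ⨆ R : 𝒟, testOutStarE α p q r 𝒟 A u v R

/-- The grand maximal truncated operator `M_T` (for `m = 2`). -/
noncomputable def grandMax (T : ((Fin n → ℝ) → ℝ) → (Fin n → ℝ) → ℝ)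
    (A1 A2 : Matrix (Fin n) (Fin n) ℝ) (f : (Fin n → ℝ) → ℝ) (x : Fin n → ℝ) : ℝ≥0∞ :=
  ⨆ P : {P : Cube n × Cube n // A1⁻¹.mulVec x ∈ P.1.set ∧ A2⁻¹.mulVec x ∈ P.2.set},
    essSup (fun ξ => ENNReal.ofReal
        |T (Set.indicator ((P.1.1.tri.set ∪ P.1.2.tri.set)ᶜ) f) ξ|)
      (volume.restrict (P.1.1.set ∪ P.1.2.set))

/-- The local grand maximal truncated operator `M_{T,Q₀¹∪Q₀²}` (for `m = 2`). -/
noncomputable def locGrandMax (T : ((Fin n → ℝ) → ℝ) → (Fin n → ℝ) → ℝ)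
    (A1 A2 : Matrix (Fin n) (Fin n) ℝ) (Q01 Q02 : Cube n)
    (f : (Fin n → ℝ) → ℝ) (x : Fin n → ℝ) : ℝ≥0∞ :=
  ⨆ P : {P : Cube n × Cube n // (A1⁻¹.mulVec x ∈ P.1.set ∧ Q01.set ⊆ P.1.set) ∧
      (A2⁻¹.mulVec x ∈ P.2.set ∧ Q02.set ⊆ P.2.set)},
    essSup (fun ξ => ENNReal.ofReal
        |T (Set.indicator ((Q01.tri.set ∪ Q02.tri.set) \ (P.1.1.tri.set ∪ P.1.2.tri.set)) f) ξ|)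
      (volume.restrict (P.1.1.set ∪ P.1.2.set))

/-
Testing the `𝒜_{B,p}` condition on cubes shrinking to a Lebesgue point `x` gives
`w(Bx) · w(x)^{-1} ≤ [w]_{𝒜_{B,p}}` for almost every `x`, since `(w^{1-p'})^{p-1} = w^{-1}`.
Lebesgue differentiation is applied to truncations of `w ∘ B` and `w^{1-p'}`, so no local
integrability of them is needed, and the bound also holds where `w` vanishes.
With `B = A` and `B = A⁻¹` this gives `w_A ∼ w`. Conversely, `[w]_{𝒜_{B,p}}` and `[w]_{A_p}`
differ only in averaging `w_B` instead of `w`, so `w_A ∼ w` transfers finiteness between them.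
-/

open Filter Metric Topology
open scoped NNReal Matrix

namespace ENNReal

theorem mul_rpow_le_of_forall_min_natCast_le {a b C : ℝ≥0∞} {s : ℝ}
    (h : ∀ N : ℕ, min a N * min b N ^ s ≤ C) : a * b ^ s ≤ C := by
  have htrunc : ∀ c : ℝ≥0∞, Tendsto (fun N : ℕ => min c N) atTop (𝓝 c) := fun c => by
    simpa using tendsto_const_nhds.min tendsto_nat_nhds_top
  rcases eq_or_ne a 0 with rfl | ha
  · simp
  rcases eq_or_ne (b ^ s) 0 with hb | hb
  · simp [hb]
  exact le_of_tendsto' (Tendsto.mul (htrunc a) (Or.inl ha) ((htrunc b).ennrpow_const s)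
    (Or.inl hb)) h

end ENNReal

theorem isLocallyFiniteMeasure_withDensity_min_natCast {β : Type*} [TopologicalSpace β]
    [MeasurableSpace β] {μ : Measure β} [IsLocallyFiniteMeasure μ] (f : β → ℝ≥0∞) (N : ℕ) :
    IsLocallyFiniteMeasure (μ.withDensity fun y => min (f y) N) := by
  have hle : μ.withDensity (fun y => min (f y) N) ≤ (N : ℝ≥0) • μ := by
    calc μ.withDensity (fun y => min (f y) N) ≤ μ.withDensity fun _ => (N : ℝ≥0∞) :=
          withDensity_mono (ae_of_all _ fun _ => min_le_right _ _)
      _ = (N : ℝ≥0) • μ := by rw [withDensity_const]; rfl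
  exact Measure.isLocallyFiniteMeasure_of_le hle

section Differentiation

variable {β : Type*} [MetricSpace β] [MeasurableSpace β] [BorelSpace β]
  [SecondCountableTopology β] [HasBesicovitchCovering β]
  {μ : Measure β} [IsLocallyFiniteMeasure μ]

theorem ae_tendsto_setLAverage_closedBall {f : β → ℝ≥0∞} (hf : AEMeasurable f μ)
    [IsLocallyFiniteMeasure (μ.withDensity f)] :
    ∀ᵐ x ∂μ, Tendsto (fun r => ⨍⁻ y in closedBall x r, f y ∂μ) (𝓝[>] 0) (𝓝 (f x)) := by
  filter_upwards [Besicovitch.ae_tendsto_rnDeriv (μ.withDensity f) μ,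
    Measure.rnDeriv_withDensity₀ μ hf] with x hx hfx
  rw [← hfx]
  refine hx.congr fun r => ?_
  rw [setLAverage_eq, withDensity_apply _ measurableSet_closedBall]

theorem ae_mul_rpow_le_of_forall_closedBall {f g : β → ℝ≥0∞} (hf : AEMeasurable f μ)
    (hg : AEMeasurable g μ) {s : ℝ} (hs : 0 ≤ s) {C : ℝ≥0∞}
    (h : ∀ x, ∀ r > 0,
      (⨍⁻ y in closedBall x r, f y ∂μ) * (⨍⁻ y in closedBall x r, g y ∂μ) ^ s ≤ C) :
    ∀ᵐ x ∂μ, f x * g x ^ s ≤ C := by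
  have htrunc : ∀ N : ℕ, ∀ᵐ x ∂μ, min (f x) N * min (g x) N ^ s ≤ C := fun N => by
    have := isLocallyFiniteMeasure_withDensity_min_natCast (μ := μ) f N
    have := isLocallyFiniteMeasure_withDensity_min_natCast (μ := μ) g N
    have hN : AEMeasurable (fun _ => (N : ℝ≥0∞)) μ := aemeasurable_const
    filter_upwards [ae_tendsto_setLAverage_closedBall (hf.min hN),
      ae_tendsto_setLAverage_closedBall (hg.min hN)] with x hfx hgx
    refine le_of_tendsto
      (ENNReal.Tendsto.mul hfx (Or.inr (by simp [hs])) (hgx.ennrpow_const s)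
        (Or.inr (by simp)))
      (eventually_mem_nhdsWithin.mono fun r hr => (h x r hr).trans' ?_)
    gcongr <;> exact ae_of_all _ fun _ => min_le_left _ _
  filter_upwards [ae_all_iff.2 htrunc] with x hx
  exact ENNReal.mul_rpow_le_of_forall_min_natCast_le hx

end Differentiation

variable {n : ℕ}

theorem quasiMeasurePreserving_mulVec {B : Matrix (Fin n) (Fin n) ℝ} (hB : B.det ≠ 0) :
    Measure.QuasiMeasurePreserving B.mulVec volume volume := by
  simpa [Matrix.toLin'_apply', Matrix.coe_mulVecLin] using
    Measure.LinearMap.quasiMeasurePreserving volume (Matrix.toLin' B)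
      (by rwa [LinearMap.det_toLin'])

namespace Cube

def centered (x : Fin n → ℝ) (r : ℝ) (hr : 0 < r) : Cube n :=
  ⟨fun i => x i - r, 2 * r, by positivity⟩

theorem set_eq_pi (Q : Cube n) :
    Q.set = univ.pi fun i => Ico (Q.corner i) (Q.corner i + Q.side) := by
  ext x
  simp [Cube.set, Set.mem_pi]

theorem volume_set (Q : Cube n) : volume Q.set = ENNReal.ofReal Q.vol := by
  rw [set_eq_pi, volume_pi_pi]
  simp [Real.volume_Ico, vol, ← ENNReal.ofReal_pow Q.side_pos.le]

/-- `closedBall` on `Fin n → ℝ` is the ball of the sup metric, i.e. the closed cube. -/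
theorem closedBall_ae_eq_centered (x : Fin n → ℝ) {r : ℝ} (hr : 0 < r) :
    closedBall x r =ᵐ[volume] (centered x r hr).set := by
  rw [closedBall_pi x hr.le, set_eq_pi]
  simp only [Real.closedBall_eq_Icc, centered]
  refine (Measure.pi_Ico_ae_eq_pi_Icc.symm.trans ?_)
  congr! 3 with i
  ring

theorem setLAverage_eq (Q : Cube n) (f : (Fin n → ℝ) → ℝ≥0∞) :
    ⨍⁻ y in Q.set, f y ∂volume = (ENNReal.ofReal Q.vol)⁻¹ * ∫⁻ y in Q.set, f y := by
  rw [MeasureTheory.setLAverage_eq, volume_set, div_eq_mul_inv, mul_comm]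

end Cube

theorem conj_sub_one_mul {p : ℝ} (hp : 1 < p) : (1 - conj p) * (p - 1) = -1 := by
  rw [conj, sub_mul, div_mul_cancel₀ p (by linarith)]
  ring

section Ap

variable {p : ℝ} {B B' : Matrix (Fin n) (Fin n) ℝ} {w : (Fin n → ℝ) → ℝ}

theorem apE_eq_setLAverage (hp : p ≠ 1) (Q : Cube n) :
    apE B p w Q = (⨍⁻ x in Q.set, ENNReal.ofReal (w (B *ᵥ x)) ∂volume) *
      (⨍⁻ x in Q.set, ENNReal.ofReal (w x) ^ (1 - conj p) ∂volume) ^ (p - 1) := by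
  simp [apE, hp, Cube.setLAverage_eq]

/-- Only the first factor of `apE` involves the matrix. -/
theorem apConst_le_mul_of_ae_le {c : ℝ} (hc : 0 ≤ c)
    (h : ∀ᵐ x, w (B *ᵥ x) ≤ c * w (B' *ᵥ x)) :
    apConst B p w ≤ ENNReal.ofReal c * apConst B' p w := by
  refine iSup_le fun Q => ?_
  have hint : ∫⁻ x in Q.set, ENNReal.ofReal (w (B *ᵥ x)) ≤
      ∫⁻ x in Q.set, ENNReal.ofReal c * ENNReal.ofReal (w (B' *ᵥ x)) := by
    refine lintegral_mono_ae (ae_restrict_of_ae (h.mono fun x hx => ?_))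
    rw [← ENNReal.ofReal_mul hc]
    exact ENNReal.ofReal_le_ofReal hx
  rw [lintegral_const_mul' _ _ ENNReal.ofReal_ne_top] at hint
  calc apE B p w Q ≤ ENNReal.ofReal c * apE B' p w Q := by
        unfold apE
        rw [← mul_assoc, mul_left_comm (ENNReal.ofReal c)]
        gcongr
    _ ≤ ENNReal.ofReal c * apConst B' p w := by gcongr; exact le_iSup (apE B' p w) Q

theorem MemAp.of_ae_le_mul {c : ℝ} (hc : 0 ≤ c) (h : ∀ᵐ x, w (B *ᵥ x) ≤ c * w (B' *ᵥ x))
    (hB' : MemAp B' p w) : MemAp B p w :=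
  (apConst_le_mul_of_ae_le hc h).trans_lt (ENNReal.mul_lt_top ENNReal.ofReal_lt_top hB')

theorem MemAp.ae_comp_mulVec_le (hp : 1 < p) (hB : B.det ≠ 0) (hw : ∀ x, 0 ≤ w x)
    (hwm : AEMeasurable w) (hBw : MemAp B p w) :
    ∀ᵐ x, w (B *ᵥ x) ≤ (apConst B p w).toReal * w x := by
  have hwB : AEMeasurable fun x => ENNReal.ofReal (w (B *ᵥ x)) :=
    ENNReal.measurable_ofReal.comp_aemeasurable
      (hwm.comp_quasiMeasurePreserving (quasiMeasurePreserving_mulVec hB))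
  have hσ : AEMeasurable fun x => ENNReal.ofReal (w x) ^ (1 - conj p) :=
    (ENNReal.measurable_ofReal.comp_aemeasurable hwm).pow_const _
  have hbound := ae_mul_rpow_le_of_forall_closedBall hwB hσ (s := p - 1) (by linarith)
    (C := apConst B p w) fun x r hr => by
      simp only [Measure.restrict_congr_set (Cube.closedBall_ae_eq_centered x hr)]
      rw [← apE_eq_setLAverage hp.ne']
      exact le_iSup (apE B p w) _
  filter_upwards [hbound] with x hx
  rw [← ENNReal.rpow_mul, conj_sub_one_mul hp, ENNReal.rpow_neg_one, ← div_eq_mul_inv,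
    ENNReal.div_le_iff_le_mul (Or.inr hBw.ne) (Or.inl ENNReal.ofReal_ne_top),
    ← ENNReal.ofReal_toReal hBw.ne, ← ENNReal.ofReal_mul ENNReal.toReal_nonneg] at hx
  exact (ENNReal.ofReal_le_ofReal_iff (mul_nonneg ENNReal.toReal_nonneg (hw x))).1 hx

end Ap

theorem memAp_inter_iff_general (n : ℕ) (p : ℝ) (hp : 1 < p)
    (A : Matrix (Fin n) (Fin n) ℝ) (hA : A.det ≠ 0)
    (w : (Fin n → ℝ) → ℝ) (hw : ∀ x, 0 ≤ w x) (hwl : LocallyIntegrable w volume) :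
    (MemAp A p w ∧ MemAp A⁻¹ p w) ↔
      (MemAp (1 : Matrix (Fin n) (Fin n) ℝ) p w ∧
        ∃ c1 c2 : ℝ, 0 < c1 ∧ c1 ≤ c2 ∧
          ∀ᵐ x ∂(volume : Measure (Fin n → ℝ)),
            c1 * w x ≤ w (A.mulVec x) ∧ w (A.mulVec x) ≤ c2 * w x) := by
  have hwm : AEMeasurable w := hwl.aestronglyMeasurable.aemeasurable
  have hA' : A⁻¹.det ≠ 0 := by simpa [Matrix.det_nonsing_inv] using hA
  have hAu : IsUnit A.det := hA.isUnit
  constructor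
  · rintro ⟨hAw, hA'w⟩
    set C₁ := (apConst A p w).toReal
    set C₂ := (apConst A⁻¹ p w).toReal
    have hlow : ∀ᵐ x, w x ≤ C₂ * w (A *ᵥ x) := by
      filter_upwards [(quasiMeasurePreserving_mulVec hA).ae (hA'w.ae_comp_mulVec_le hp hA' hw hwm)]
        with x hx
      simpa [Matrix.mulVec_mulVec, Matrix.nonsing_inv_mul A hAu] using hx
    refine ⟨hAw.of_ae_le_mul ENNReal.toReal_nonneg (by simpa using hlow),
      (C₂ + 1)⁻¹, max C₁ (C₂ + 1)⁻¹, by positivity, le_max_right _ _, ?_⟩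
    filter_upwards [hAw.ae_comp_mulVec_le hp hA hw hwm, hlow] with x hup hlow
    constructor
    · rw [inv_mul_le_iff₀ (by positivity)]
      nlinarith [hw (A *ᵥ x)]
    · nlinarith [le_max_left C₁ (C₂ + 1)⁻¹, hw x]
  · rintro ⟨h1w, c₁, c₂, hc₁, hc₁₂, hbounds⟩
    have hup : ∀ᵐ x, w (A *ᵥ x) ≤ c₂ * w (1 *ᵥ x) := by
      simpa using hbounds.mono fun x hx => hx.2
    have hlow : ∀ᵐ x, w (A⁻¹ *ᵥ x) ≤ c₁⁻¹ * w (1 *ᵥ x) := by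
      filter_upwards [(quasiMeasurePreserving_mulVec hA').ae hbounds] with x hx
      rw [le_inv_mul_iff₀ hc₁]
      simpa [Matrix.mulVec_mulVec, Matrix.mul_nonsing_inv A hAu] using hx.1
    exact ⟨h1w.of_ae_le_mul (by linarith) hup, h1w.of_ae_le_mul (by positivity) hlow⟩

/-- `w ∈ 𝒜_{A,p} ∩ 𝒜_{A⁻¹,p}` iff `w` is a Muckenhoupt `A_p` weight
and `w_A ∼ w`. -/
theorem memAp_inter_iff (n : ℕ) (hn : 0 < n) (p : ℝ) (hp : 1 < p)
    (A : Matrix (Fin n) (Fin n) ℝ) (hA : A.det ≠ 0)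
    (w : (Fin n → ℝ) → ℝ) (hw : ∀ x, 0 ≤ w x) (hwl : LocallyIntegrable w volume) :
    (MemAp A p w ∧ MemAp A⁻¹ p w) ↔
      (MemAp (1 : Matrix (Fin n) (Fin n) ℝ) p w ∧
        ∃ c1 c2 : ℝ, 0 < c1 ∧ c1 ≤ c2 ∧
          ∀ᵐ x ∂(volume : Measure (Fin n → ℝ)),
            c1 * w x ≤ w (A.mulVec x) ∧ w (A.mulVec x) ≤ c2 * w x) :=
  memAp_inter_iff_general n p hp A hA w hw hwl

end Paper
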